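/- Let f : [a,b] → ℝ be monotonically nondecreasing on [a,b]. Then for every x ∈ [a,b]: |∫_a^b f(t) dt − [(x−a)·f(a) + (b−x)·f(b)]| ≤ (b−x)·f(b) − (x−a)·f(a) + ∫_a^b sgn(x−t)·f(t) dt ≤ (x−a)·[f(x) − f(a)] + (b−x)·[f(b) − f(x)] ≤ [ (1/2)(b−a) + |x − (a+b)/2| ] · [f(b) − f(a)]. -/
import Mathlib


open MeasureTheory Set intervalIntegral

/-- **Generalised trapezoid inequality for monotone nondecreasing functions.** -/
theorem generalised_trapezoid_monotone
    (a b : ℝ) (hab : a < b) (f : ℝ → ℝ)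
    (hf : MonotoneOn f (Set.Icc a b))
    (x : ℝ) (hx : x ∈ Set.Icc a b) :
    |(∫ t in a..b, f t) - ((x - a) * f a + (b - x) * f b)| ≤
        (b - x) * f b - (x - a) * f a + ∫ t in a..b, Real.sign (x - t) * f t ∧
      (b - x) * f b - (x - a) * f a + (∫ t in a..b, Real.sign (x - t) * f t) ≤
        (x - a) * (f x - f a) + (b - x) * (f b - f x) ∧
      (x - a) * (f x - f a) + (b - x) * (f b - f x) ≤
        ((1 / 2) * (b - a) + |x - (a + b) / 2|) * (f b - f a) := by
  obtain ⟨hax, hxb⟩ := hx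
  have hfax : IntervalIntegrable f volume a x := by
    apply MonotoneOn.intervalIntegrable
    rw [Set.uIcc_of_le hax]
    exact hf.mono (Set.Icc_subset_Icc le_rfl hxb)
  have hfxb : IntervalIntegrable f volume x b := by
    apply MonotoneOn.intervalIntegrable
    rw [Set.uIcc_of_le hxb]
    exact hf.mono (Set.Icc_subset_Icc hax le_rfl)
  have hne : ∀ᵐ t : ℝ, t ≠ x := by
    rw [MeasureTheory.ae_iff]
    simpa using measure_singleton x
  -- a.e. equalities on the two pieces
  have hae1 : ∀ᵐ t : ℝ, t ∈ Set.uIoc a x → Real.sign (x - t) * f t = f t := by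
    filter_upwards [hne] with t ht hmem
    rw [Set.uIoc_of_le hax] at hmem
    have h0 : 0 < x - t := by
      rcases lt_or_eq_of_le hmem.2 with h | h
      · linarith
      · exact absurd h ht
    rw [Real.sign_of_pos h0, one_mul]
  have hae2 : ∀ᵐ t : ℝ, t ∈ Set.uIoc x b → Real.sign (x - t) * f t = -f t := by
    filter_upwards with t hmem
    rw [Set.uIoc_of_le hxb] at hmem
    have h0 : x - t < 0 := by linarith [hmem.1]
    rw [Real.sign_of_neg h0]; ring
  have hres1 : (fun t => Real.sign (x - t) * f t)
      =ᵐ[volume.restrict (Set.uIoc a x)] f :=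
    (ae_restrict_iff' measurableSet_uIoc).mpr hae1
  have hres2 : (fun t => Real.sign (x - t) * f t)
      =ᵐ[volume.restrict (Set.uIoc x b)] (fun t => -f t) :=
    (ae_restrict_iff' measurableSet_uIoc).mpr hae2
  have hgax : IntervalIntegrable (fun t => Real.sign (x - t) * f t) volume a x := by
    rw [intervalIntegrable_iff] at hfax ⊢
    exact hfax.congr_fun_ae hres1.symm
  have hgxb : IntervalIntegrable (fun t => Real.sign (x - t) * f t) volume x b := by
    rw [intervalIntegrable_iff] at hfxb ⊢
    exact (hfxb.neg).congr hres2.symm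
  have hg1 : (∫ t in a..x, Real.sign (x - t) * f t) = ∫ t in a..x, f t :=
    intervalIntegral.integral_congr_ae hae1
  have hg2 : (∫ t in x..b, Real.sign (x - t) * f t) = -∫ t in x..b, f t := by
    rw [intervalIntegral.integral_congr_ae hae2, intervalIntegral.integral_neg]
  have hS : (∫ t in a..b, Real.sign (x - t) * f t)
      = (∫ t in a..x, f t) - ∫ t in x..b, f t := by
    rw [← intervalIntegral.integral_add_adjacent_intervals hgax hgxb, hg1, hg2]
    ring
  have hI : (∫ t in a..b, f t) = (∫ t in a..x, f t) + ∫ t in x..b, f t :=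
    (intervalIntegral.integral_add_adjacent_intervals hfax hfxb).symm
  -- pointwise bounds
  have hmemA : a ∈ Set.Icc a b := ⟨le_rfl, hab.le⟩
  have hmemX : x ∈ Set.Icc a b := ⟨hax, hxb⟩
  have hmemB : b ∈ Set.Icc a b := ⟨hab.le, le_rfl⟩
  have hA1 : (x - a) * f a ≤ ∫ t in a..x, f t := by
    have := intervalIntegral.integral_mono_on hax (intervalIntegrable_const) hfax
      (fun t ht => hf hmemA ⟨ht.1, ht.2.trans hxb⟩ ht.1)
    simpa [smul_eq_mul] using this
  have hA2 : (∫ t in a..x, f t) ≤ (x - a) * f x := by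
    have := intervalIntegral.integral_mono_on hax hfax (intervalIntegrable_const)
      (fun t ht => hf ⟨ht.1, ht.2.trans hxb⟩ hmemX ht.2)
    simpa [smul_eq_mul] using this
  have hB1 : (b - x) * f x ≤ ∫ t in x..b, f t := by
    have := intervalIntegral.integral_mono_on hxb (intervalIntegrable_const) hfxb
      (fun t ht => hf hmemX ⟨hax.trans ht.1, ht.2⟩ ht.1)
    simpa [smul_eq_mul] using this
  have hB2 : (∫ t in x..b, f t) ≤ (b - x) * f b := by
    have := intervalIntegral.integral_mono_on hxb hfxb (intervalIntegrable_const)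
      (fun t ht => hf ⟨hax.trans ht.1, ht.2⟩ hmemB ht.2)
    simpa [smul_eq_mul] using this
  have hu : 0 ≤ f x - f a := by have := hf hmemA hmemX hax; linarith
  have hv : 0 ≤ f b - f x := by have := hf hmemX hmemB hxb; linarith
  refine ⟨?_, ?_, ?_⟩
  · rw [hS, hI, abs_le]
    constructor <;> linarith
  · rw [hS]
    linarith
  · have hM1 : x - a ≤ (1 / 2) * (b - a) + |x - (a + b) / 2| := by
      rcases abs_cases (x - (a + b) / 2) with ⟨h, _⟩ | ⟨h, _⟩ <;> linarith
    have hM2 : b - x ≤ (1 / 2) * (b - a) + |x - (a + b) / 2| := by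
      rcases abs_cases (x - (a + b) / 2) with ⟨h, _⟩ | ⟨h, _⟩ <;> linarith
    nlinarith [mul_le_mul_of_nonneg_right hM1 hu, mul_le_mul_of_nonneg_right hM2 hv]
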